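/- For fixed reals ℓ < u, the function Ψ(h) = h + (f(u−h) − f(ℓ−h))/(Q(u−h) + Φ(ℓ−h)) is strictly increasing on ℝ, where f, Q, Φ are the standard normal density, tail function, and cdf. -/

import Mathlib

/-!
`Ψ(h)` is the mean of `Y ~ N(h, 1)` conditioned on `Y ∉ (ℓ, u)`: with `a = ℓ - h`, `b = u - h`,
the moments of `φ` over `(-∞, a] ∪ (b, ∞)` are `M₀ = Q(b) + Φ(a)`, `M₁ = φ(b) - φ(a)` and
`M₂ = M₀ + b φ(b) - a φ(a)`. Since `M₀' = M₁` and `M₁' = M₂ - M₀`, one finds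
`Ψ' = (M₀ M₂ - M₁²) / M₀²`, the conditional variance, which is positive by Cauchy–Schwarz.
-/

open Real MeasureTheory Set

noncomputable def stdNormalPdf (x : ℝ) : ℝ := (Real.sqrt (2 * Real.pi))⁻¹ * Real.exp (-x ^ 2 / 2)

noncomputable def gaussQ (x : ℝ) : ℝ := ∫ t in Set.Ici x, stdNormalPdf t

noncomputable def gaussPhi (x : ℝ) : ℝ := ∫ t in Set.Iic x, stdNormalPdf t

section Variance

variable {μ : Measure ℝ} {g : ℝ → ℝ}

theorem integrable_sq_sub_mul (hg : Integrable g μ) (hxg : Integrable (fun x => x * g x) μ)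
    (hx2g : Integrable (fun x => x ^ 2 * g x) μ) (m : ℝ) :
    Integrable (fun x => (x - m) ^ 2 * g x) μ :=
  ((hx2g.sub (hxg.const_mul (2 * m))).add (hg.const_mul (m * m))).congr
    (ae_of_all _ fun x => by simp only [Pi.add_apply, Pi.sub_apply]; ring)

theorem integral_sq_sub_mul (hg : Integrable g μ) (hxg : Integrable (fun x => x * g x) μ)
    (hx2g : Integrable (fun x => x ^ 2 * g x) μ) (m : ℝ) :
    ∫ x, (x - m) ^ 2 * g x ∂μ =
      (∫ x, g x ∂μ) * (m * m) + (-2 * ∫ x, x * g x ∂μ) * m + ∫ x, x ^ 2 * g x ∂μ := by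
  have hexpand : (fun x => (x - m) ^ 2 * g x) =
      fun x => (x ^ 2 * g x - 2 * m * (x * g x)) + m * m * g x := by
    funext x; ring
  rw [hexpand, integral_add ?_ (hg.const_mul _), integral_sub hx2g (hxg.const_mul _),
    integral_const_mul, integral_const_mul]
  · ring
  · exact hx2g.sub (hxg.const_mul _)

/-- `m ↦ ∫ (x - m)² g` is a quadratic polynomial without real roots, so its discriminant is
negative. -/
theorem sq_integral_mul_lt_of_forall_pos (hg : Integrable g μ)
    (hxg : Integrable (fun x => x * g x) μ) (hx2g : Integrable (fun x => x ^ 2 * g x) μ)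
    (h0 : ∫ x, g x ∂μ ≠ 0) (hvar : ∀ m, 0 < ∫ x, (x - m) ^ 2 * g x ∂μ) :
    (∫ x, x * g x ∂μ) ^ 2 < (∫ x, g x ∂μ) * ∫ x, x ^ 2 * g x ∂μ := by
  have hdisc := discrim_lt_zero h0 fun m => integral_sq_sub_mul hg hxg hx2g m ▸ hvar m
  rw [discrim] at hdisc
  linarith

end Variance

section HalfLineFTC

variable {E : Type*} [NormedAddCommGroup E] [NormedSpace ℝ E] [CompleteSpace E] {f f' : ℝ → E}
  {a : ℝ}

theorem integral_Ioi_of_hasDerivAt_of_integrableOn (hderiv : ∀ x ∈ Ici a, HasDerivAt f (f' x) x)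
    (f'int : IntegrableOn f' (Ioi a)) (fint : IntegrableOn f (Ioi a)) :
    ∫ x in Ioi a, f' x = -f a := by
  rw [integral_Ioi_of_hasDerivAt_of_tendsto' hderiv f'int
    (tendsto_zero_of_hasDerivAt_of_integrableOn_Ioi
      (fun x hx => hderiv x (mem_Ici.2 (le_of_lt hx))) f'int fint), zero_sub]

theorem integral_Iic_of_hasDerivAt_of_integrableOn (hderiv : ∀ x ∈ Iic a, HasDerivAt f (f' x) x)
    (f'int : IntegrableOn f' (Iic a)) (fint : IntegrableOn f (Iic a)) :
    ∫ x in Iic a, f' x = f a := by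
  rw [integral_Iic_of_hasDerivAt_of_tendsto' hderiv f'int
    (tendsto_zero_of_hasDerivAt_of_integrableOn_Iic hderiv f'int fint), sub_zero]

end HalfLineFTC

lemma stdNormalPdf_pos (x : ℝ) : 0 < stdNormalPdf x := by
  unfold stdNormalPdf; positivity

lemma continuous_stdNormalPdf : Continuous stdNormalPdf := by
  unfold stdNormalPdf; fun_prop

lemma hasDerivAt_stdNormalPdf (x : ℝ) : HasDerivAt stdNormalPdf (-x * stdNormalPdf x) x := by
  have hexponent : HasDerivAt (fun y : ℝ => -y ^ 2 / 2) (-x) x :=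
    ((hasDerivAt_pow 2 x).neg.div_const 2).congr_deriv (by norm_num; ring)
  exact (hexponent.exp.const_mul _).congr_deriv (by unfold stdNormalPdf; ring)

lemma integrable_pow_mul_stdNormalPdf (n : ℕ) : Integrable fun x => x ^ n * stdNormalPdf x := by
  refine ((integrable_rpow_mul_exp_neg_mul_sq (b := 1 / 2) (by norm_num) (s := n)
    (by linarith [n.cast_nonneg (α := ℝ)])).const_mul (√(2 * π))⁻¹).congr
    (ae_of_all _ fun x => ?_)
  simp only [stdNormalPdf, rpow_natCast]
  rw [show -(1 / 2) * x ^ 2 = -x ^ 2 / 2 by ring]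
  ring

lemma integrable_stdNormalPdf : Integrable stdNormalPdf := by
  simpa using integrable_pow_mul_stdNormalPdf 0

lemma integrable_mul_stdNormalPdf : Integrable fun x => x * stdNormalPdf x := by
  simpa using integrable_pow_mul_stdNormalPdf 1

lemma setIntegral_stdNormalPdf_pos {s : Set ℝ} (hs : volume s ≠ 0) :
    0 < ∫ x in s, stdNormalPdf x := by
  have hsupport : Function.support stdNormalPdf = univ := by
    ext x; simp [(stdNormalPdf_pos x).ne']
  rw [setIntegral_pos_iff_support_of_nonneg_ae (ae_of_all _ fun x => (stdNormalPdf_pos x).le)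
    integrable_stdNormalPdf.integrableOn, hsupport, univ_inter]
  exact pos_iff_ne_zero.2 hs

lemma setIntegral_sq_sub_mul_stdNormalPdf_pos {s : Set ℝ} (hs : volume s ≠ 0) (m : ℝ) :
    0 < ∫ x in s, (x - m) ^ 2 * stdNormalPdf x := by
  have hsupport : Function.support (fun x => (x - m) ^ 2 * stdNormalPdf x) = {m}ᶜ := by
    ext x; simp [sub_eq_zero, (stdNormalPdf_pos x).ne']
  rw [setIntegral_pos_iff_support_of_nonneg_ae
    (ae_of_all _ fun x => mul_nonneg (sq_nonneg _) (stdNormalPdf_pos x).le)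
    (integrable_sq_sub_mul integrable_stdNormalPdf integrable_mul_stdNormalPdf
      (integrable_pow_mul_stdNormalPdf 2) m).integrableOn,
    hsupport, ← sdiff_eq_compl_inter, measure_sdiff_null (measure_singleton m)]
  exact pos_iff_ne_zero.2 hs

lemma gaussQ_add_gaussPhi (x : ℝ) : gaussQ x + gaussPhi x = ∫ t, stdNormalPdf t := by
  rw [gaussQ, gaussPhi, integral_Ici_eq_integral_Ioi, add_comm,
    intervalIntegral.integral_Iic_add_Ioi integrable_stdNormalPdf.integrableOn
      integrable_stdNormalPdf.integrableOn]

lemma hasDerivAt_gaussPhi (x : ℝ) : HasDerivAt gaussPhi (stdNormalPdf x) x := by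
  have hΦ : gaussPhi = fun y => gaussPhi 0 + ∫ t in (0 : ℝ)..y, stdNormalPdf t := by
    funext y
    rw [gaussPhi, gaussPhi, ← intervalIntegral.integral_Iic_sub_Iic
      integrable_stdNormalPdf.integrableOn integrable_stdNormalPdf.integrableOn]
    ring
  rw [hΦ]
  exact (intervalIntegral.integral_hasDerivAt_right integrable_stdNormalPdf.intervalIntegrable
    (continuous_stdNormalPdf.stronglyMeasurableAtFilter _ _)
    continuous_stdNormalPdf.continuousAt).const_add _

lemma hasDerivAt_gaussQ (x : ℝ) : HasDerivAt gaussQ (-stdNormalPdf x) x := by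
  have hQ : gaussQ = fun y => (∫ t, stdNormalPdf t) - gaussPhi y := by
    funext y; rw [← gaussQ_add_gaussPhi y]; ring
  rw [hQ]
  exact (hasDerivAt_gaussPhi x).const_sub _

lemma integral_Ioi_mul_stdNormalPdf (b : ℝ) :
    ∫ x in Ioi b, x * stdNormalPdf x = stdNormalPdf b := by
  rw [integral_Ioi_of_hasDerivAt_of_integrableOn (f := fun x => -stdNormalPdf x)
    (fun x _ => (hasDerivAt_stdNormalPdf x).neg.congr_deriv (by ring))
    integrable_mul_stdNormalPdf.integrableOn integrable_stdNormalPdf.neg.integrableOn, neg_neg]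

lemma integral_Iic_mul_stdNormalPdf (a : ℝ) :
    ∫ x in Iic a, x * stdNormalPdf x = -stdNormalPdf a :=
  integral_Iic_of_hasDerivAt_of_integrableOn (f := fun x => -stdNormalPdf x)
    (fun x _ => (hasDerivAt_stdNormalPdf x).neg.congr_deriv (by ring))
    integrable_mul_stdNormalPdf.integrableOn integrable_stdNormalPdf.neg.integrableOn

lemma hasDerivAt_neg_mul_stdNormalPdf (x : ℝ) :
    HasDerivAt (fun y => -(y * stdNormalPdf y)) (x ^ 2 * stdNormalPdf x - stdNormalPdf x) x :=
  ((hasDerivAt_id x).mul (hasDerivAt_stdNormalPdf x)).neg.congr_deriv (by simp; ring)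

lemma integral_Ioi_sq_mul_stdNormalPdf (b : ℝ) :
    ∫ x in Ioi b, x ^ 2 * stdNormalPdf x = gaussQ b + b * stdNormalPdf b := by
  have h := integral_Ioi_of_hasDerivAt_of_integrableOn (a := b)
    (fun x _ => hasDerivAt_neg_mul_stdNormalPdf x)
    ((integrable_pow_mul_stdNormalPdf 2).sub integrable_stdNormalPdf).integrableOn
    integrable_mul_stdNormalPdf.neg.integrableOn
  rw [integral_sub (integrable_pow_mul_stdNormalPdf 2).integrableOn
    integrable_stdNormalPdf.integrableOn] at h
  rw [gaussQ, integral_Ici_eq_integral_Ioi]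
  linarith

lemma integral_Iic_sq_mul_stdNormalPdf (a : ℝ) :
    ∫ x in Iic a, x ^ 2 * stdNormalPdf x = gaussPhi a - a * stdNormalPdf a := by
  have h := integral_Iic_of_hasDerivAt_of_integrableOn (a := a)
    (fun x _ => hasDerivAt_neg_mul_stdNormalPdf x)
    ((integrable_pow_mul_stdNormalPdf 2).sub integrable_stdNormalPdf).integrableOn
    integrable_mul_stdNormalPdf.neg.integrableOn
  rw [integral_sub (integrable_pow_mul_stdNormalPdf 2).integrableOn
    integrable_stdNormalPdf.integrableOn] at h
  rw [gaussPhi]; linarith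

lemma gaussQ_add_gaussPhi_pos (a b : ℝ) : 0 < gaussQ b + gaussPhi a :=
  add_pos (setIntegral_stdNormalPdf_pos (by simp)) (setIntegral_stdNormalPdf_pos (by simp))

/-- The variance of the standard normal law conditioned on `(-∞, a] ∪ (b, ∞)` is positive,
written out through its first three moments. -/
theorem sq_sub_stdNormalPdf_lt (a b : ℝ) :
    (stdNormalPdf b - stdNormalPdf a) ^ 2 <
      (gaussQ b + gaussPhi a) *
        (gaussQ b + gaussPhi a + (b * stdNormalPdf b - a * stdNormalPdf a)) := by
  let μ : Measure ℝ := volume.restrict (Ioi b) + volume.restrict (Iic a)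
  have hint {F : ℝ → ℝ} (hF : Integrable F) : Integrable F μ := by
    exact hF.restrict.add_measure hF.restrict
  have hsplit {F : ℝ → ℝ} (hF : Integrable F) :
      ∫ x, F x ∂μ = (∫ x in Ioi b, F x) + ∫ x in Iic a, F x := by
    exact integral_add_measure hF.restrict hF.restrict
  have hM0 : ∫ x, stdNormalPdf x ∂μ = gaussQ b + gaussPhi a := by
    rw [hsplit integrable_stdNormalPdf, gaussQ, gaussPhi, integral_Ici_eq_integral_Ioi]
  have hM1 : ∫ x, x * stdNormalPdf x ∂μ = stdNormalPdf b - stdNormalPdf a := by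
    rw [hsplit integrable_mul_stdNormalPdf, integral_Ioi_mul_stdNormalPdf,
      integral_Iic_mul_stdNormalPdf, sub_eq_add_neg]
  have hM2 : ∫ x, x ^ 2 * stdNormalPdf x ∂μ =
      gaussQ b + gaussPhi a + (b * stdNormalPdf b - a * stdNormalPdf a) := by
    rw [hsplit (integrable_pow_mul_stdNormalPdf 2), integral_Ioi_sq_mul_stdNormalPdf,
      integral_Iic_sq_mul_stdNormalPdf]
    ring
  have hvar (m : ℝ) : 0 < ∫ x, (x - m) ^ 2 * stdNormalPdf x ∂μ := by
    rw [hsplit (integrable_sq_sub_mul integrable_stdNormalPdf integrable_mul_stdNormalPdf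
      (integrable_pow_mul_stdNormalPdf 2) m)]
    exact add_pos_of_pos_of_nonneg (setIntegral_sq_sub_mul_stdNormalPdf_pos (by simp) m)
      (setIntegral_nonneg measurableSet_Iic fun x _ =>
        mul_nonneg (sq_nonneg _) (stdNormalPdf_pos x).le)
  have h := sq_integral_mul_lt_of_forall_pos (hint integrable_stdNormalPdf)
    (hint integrable_mul_stdNormalPdf) (hint (integrable_pow_mul_stdNormalPdf 2))
    (hM0 ▸ (gaussQ_add_gaussPhi_pos a b).ne') hvar
  rwa [hM0, hM1, hM2] at h

lemma hasDerivAt_tailMean (ℓ u h : ℝ) :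
    HasDerivAt (fun h => (stdNormalPdf (u - h) - stdNormalPdf (ℓ - h))
        / (gaussQ (u - h) + gaussPhi (ℓ - h)))
      ((((u - h) * stdNormalPdf (u - h) - (ℓ - h) * stdNormalPdf (ℓ - h))
          * (gaussQ (u - h) + gaussPhi (ℓ - h))
        - (stdNormalPdf (u - h) - stdNormalPdf (ℓ - h)) ^ 2)
        / (gaussQ (u - h) + gaussPhi (ℓ - h)) ^ 2) h := by
  have hshift (c : ℝ) : HasDerivAt (fun y => c - y) (-1) h := by
    simpa using (hasDerivAt_id h).const_sub c
  have hnum : HasDerivAt (fun h => stdNormalPdf (u - h) - stdNormalPdf (ℓ - h))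
      ((u - h) * stdNormalPdf (u - h) - (ℓ - h) * stdNormalPdf (ℓ - h)) h :=
    (((hasDerivAt_stdNormalPdf _).comp h (hshift u)).sub
      ((hasDerivAt_stdNormalPdf _).comp h (hshift ℓ))).congr_deriv (by ring)
  have hden : HasDerivAt (fun h => gaussQ (u - h) + gaussPhi (ℓ - h))
      (stdNormalPdf (u - h) - stdNormalPdf (ℓ - h)) h :=
    (((hasDerivAt_gaussQ _).comp h (hshift u)).add
      ((hasDerivAt_gaussPhi _).comp h (hshift ℓ))).congr_deriv (by ring)
  exact (hnum.div hden (gaussQ_add_gaussPhi_pos _ _).ne').congr_deriv (by ring)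

theorem stmt11_general (ℓ u : ℝ) :
    StrictMono (fun h : ℝ =>
      h + (stdNormalPdf (u - h) - stdNormalPdf (ℓ - h))
            / (gaussQ (u - h) + gaussPhi (ℓ - h))) := by
  refine strictMono_of_hasDerivAt_pos
    (fun h => (hasDerivAt_id h).add (hasDerivAt_tailMean ℓ u h)) fun h => ?_
  have hD := gaussQ_add_gaussPhi_pos (ℓ - h) (u - h)
  have hvar := sq_sub_stdNormalPdf_lt (ℓ - h) (u - h)
  rw [one_add_div (by positivity)]
  exact div_pos (by nlinarith) (by positivity)

theorem stmt11 (ℓ u : ℝ) (hlu : ℓ < u) :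
    StrictMono (fun h : ℝ =>
      h + (stdNormalPdf (u - h) - stdNormalPdf (ℓ - h))
            / (gaussQ (u - h) + gaussPhi (ℓ - h))) :=
  stmt11_general ℓ u
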